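/- For every j with 1 ≤ j ≤ k, (s₁ ∘ s₂ + s₂ ∘ s₁)(e_j) = e_{j−2} (with the convention e_i = 0 for i ≤ 0); that is, the operator u = t + t^{-1} acts on the standard basis as the shift by 2. -/
import Mathlib


/-- The `j`-th standard basis vector of `(ZMod 2)^k`, 1-indexed; by convention it is `0`
for `j = 0` (and for `j > k`). -/
def eVec (k j : ℕ) : Fin k → ZMod 2 := fun i => if (i : ℕ) + 1 = j then 1 else 0

/-- The involution `s₁`, defined on the standard basis by `s₁ e_j = e_j + e_{j-1}` if
`j ≡ k (mod 2)` and `s₁ e_j = e_j` otherwise. -/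
noncomputable def sOne (k : ℕ) : Module.End (ZMod 2) (Fin k → ZMod 2) :=
  (Pi.basisFun (ZMod 2) (Fin k)).constr (ZMod 2) fun i =>
    if ((i : ℕ) + 1) % 2 = k % 2 then eVec k ((i : ℕ) + 1) + eVec k (i : ℕ)
    else eVec k ((i : ℕ) + 1)

/-- The involution `s₂`, defined on the standard basis by `s₂ e_j = e_j + e_{j-1}` if
`j ≢ k (mod 2)` and `s₂ e_j = e_j` otherwise. -/
noncomputable def sTwo (k : ℕ) : Module.End (ZMod 2) (Fin k → ZMod 2) :=
  (Pi.basisFun (ZMod 2) (Fin k)).constr (ZMod 2) fun i =>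
    if ((i : ℕ) + 1) % 2 ≠ k % 2 then eVec k ((i : ℕ) + 1) + eVec k (i : ℕ)
    else eVec k ((i : ℕ) + 1)

/-- `t = s₂ ∘ s₁`. -/
noncomputable def tEnd (k : ℕ) : Module.End (ZMod 2) (Fin k → ZMod 2) :=
  sTwo k * sOne k


lemma eVec_zero (k : ℕ) : eVec k 0 = 0 := by
  funext i; simp [eVec]

lemma eVec_eq_basis (k j : ℕ) (hj1 : 1 ≤ j) (hjk : j ≤ k) :
    eVec k j = Pi.basisFun (ZMod 2) (Fin k) ⟨j - 1, by omega⟩ := by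
  funext i
  simp only [eVec, Pi.basisFun_apply]
  rw [Pi.single_apply]
  by_cases h : (i : ℕ) + 1 = j
  · have : (⟨j - 1, by omega⟩ : Fin k) = i := by
      apply Fin.ext; simp; omega
    simp [h, this.symm]
    omega
  · have : (⟨j - 1, by omega⟩ : Fin k) ≠ i := by
      intro he
      apply h
      have := congrArg Fin.val he
      simp at this; omega
    simp [h, Ne.symm this]

lemma sOne_apply (k j : ℕ) (hjk : j ≤ k) :
    sOne k (eVec k j) =
      if j % 2 = k % 2 then eVec k j + eVec k (j - 1) else eVec k j := by
  rcases Nat.eq_zero_or_pos j with rfl | hj1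
  · rw [eVec_zero]; simp
  rw [eVec_eq_basis k j hj1 hjk, sOne, Module.Basis.constr_basis]
  simp only [show j - 1 + 1 = j from by omega]
  rw [← eVec_eq_basis k j hj1 hjk]

lemma sTwo_apply (k j : ℕ) (hjk : j ≤ k) :
    sTwo k (eVec k j) =
      if j % 2 ≠ k % 2 then eVec k j + eVec k (j - 1) else eVec k j := by
  rcases Nat.eq_zero_or_pos j with rfl | hj1
  · rw [eVec_zero]; simp
  rw [eVec_eq_basis k j hj1 hjk, sTwo, Module.Basis.constr_basis]
  simp only [show j - 1 + 1 = j from by omega]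
  rw [← eVec_eq_basis k j hj1 hjk]


/-- For `1 ≤ j ≤ k`, `(s₁ ∘ s₂ + s₂ ∘ s₁)(e_j) = e_{j-2}` (with
`e_i = 0` for `i ≤ 0`, encoded by truncated subtraction in `ℕ` and `eVec k 0 = 0`);
that is, the operator `u = t + t⁻¹` acts on the standard basis as the shift by 2. -/
theorem u_apply_eVec (k j : ℕ) (hk : 1 ≤ k) (hj1 : 1 ≤ j) (hjk : j ≤ k) :
    (sOne k * sTwo k + sTwo k * sOne k) (eVec k j) = eVec k (j - 2) := by
  have hxx : ∀ x : Fin k → ZMod 2, x + x = 0 := fun x =>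
    funext fun i => CharTwo.add_self_eq_zero _
  have key : ∀ a b c : Fin k → ZMod 2, (a + b) + (a + (b + c)) = c := by
    intro a b c
    have h : (a + b) + (a + (b + c)) = (a + a) + ((b + b) + c) := by abel
    rw [h, hxx, hxx, zero_add, zero_add]
  have key2 : ∀ a b c : Fin k → ZMod 2, (a + (b + c)) + (a + b) = c := by
    intro a b c
    have h : (a + (b + c)) + (a + b) = (a + a) + ((b + b) + c) := by abel
    rw [h, hxx, hxx, zero_add, zero_add]
  have h11 : j - 1 - 1 = j - 2 := by omega
  simp only [LinearMap.add_apply, Module.End.mul_apply]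
  rw [sOne_apply k j hjk, sTwo_apply k j hjk]
  by_cases hp : j % 2 = k % 2
  · rw [if_pos hp, if_neg (by omega : ¬ j % 2 ≠ k % 2), map_add,
      sOne_apply k j hjk, sTwo_apply k j hjk, sTwo_apply k (j-1) (by omega),
      if_pos hp, if_neg (by omega : ¬ j % 2 ≠ k % 2),
      if_pos (by omega : (j-1) % 2 ≠ k % 2), h11]
    exact key _ _ _
  · rw [if_neg hp, if_pos (by omega : j % 2 ≠ k % 2), map_add,
      sOne_apply k j hjk, sOne_apply k (j-1) (by omega), sTwo_apply k j hjk,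
      if_neg hp, if_pos (by omega : j % 2 ≠ k % 2),
      if_pos (by omega : (j-1) % 2 = k % 2), h11]
    exact key2 _ _ _
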